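/- Let K be a field, G_d : Matrix (Fin p) (Fin m_d) K and G_f : Matrix (Fin p) (Fin m_f) K. Then rank [G_d G_f] = rank G_d + m_f (strong isolability) if and only if there exists Q : Matrix (Fin m_f) (Fin p) K with Q * G_d = 0 and Q * G_f = 1 (the identity matrix I_{m_f}). (Strong isolability is equivalent to the existence of a rational filter that exactly inverts the fault channel while decoupling the disturbances — the algebraic part of the exact fault estimation problem with reference model M_r = I.) -/

import Mathlib

/-!
The column space of `[G_d G_f]` is `range G_d ⊔ range G_f`, and by the dimension formulas for
`⊔`/`⊓` and rank–nullity its dimension falls short of `rank G_d + m_f` by exactly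
`dim (range G_d ⊓ range G_f) + dim (ker G_f)`. So strong isolability says that `range G_f` meets
`range G_d` trivially and `G_f` is injective, i.e. that `G_f` followed by the quotient map modulo
`range G_d` is injective. A left inverse of that composite, precomposed with the quotient map,
is the filter `Q`; conversely such a `Q` forces both conditions.
-/

open Matrix Module LinearMap

section

variable {K V W : Type*} [DivisionRing K] [AddCommGroup V] [Module K V]
  [AddCommGroup W] [Module K W]

theorem exists_le_ker_and_comp_eq_id_iff (S : Submodule K V) (g : W →ₗ[K] V) :
    (∃ q : V →ₗ[K] W, S ≤ ker q ∧ q ∘ₗ g = LinearMap.id) ↔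
      Disjoint S (range g) ∧ Function.Injective g := by
  constructor
  · rintro ⟨q, hS, hqg⟩
    have hleft : Function.LeftInverse q g := LinearMap.congr_fun hqg
    refine ⟨Submodule.disjoint_def.mpr ?_, hleft.injective⟩
    rintro _ hv ⟨x, rfl⟩
    rw [← hleft x, hS hv, map_zero]
  · rintro ⟨hdisj, hinj⟩
    have hker : ker (S.mkQ ∘ₗ g) = ⊥ := by
      rw [ker_eq_bot']
      intro x hx
      have hgx : g x ∈ S := (Submodule.Quotient.mk_eq_zero S).mp hx
      exact hinj ((Submodule.disjoint_def.mp hdisj _ hgx ⟨x, rfl⟩).trans (map_zero g).symm)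
    obtain ⟨r, hr⟩ := (S.mkQ ∘ₗ g).exists_leftInverse_of_injective hker
    refine ⟨r ∘ₗ S.mkQ, fun v hv => ?_, by rw [comp_assoc, hr]⟩
    simp [(Submodule.Quotient.mk_eq_zero S).mpr hv]

theorem finrank_sup_range_eq_add_iff [FiniteDimensional K V] [FiniteDimensional K W]
    (S : Submodule K V) (g : W →ₗ[K] V) :
    finrank K ↥(S ⊔ range g) = finrank K S + finrank K W ↔
      Disjoint S (range g) ∧ Function.Injective g := by
  have hsup := Submodule.finrank_sup_add_finrank_inf_eq S (range g)
  have hrank := finrank_range_add_finrank_ker g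
  rw [disjoint_iff, ← ker_eq_bot, ← Submodule.finrank_eq_zero, ← Submodule.finrank_eq_zero]
  omega

end

namespace Matrix

theorem range_mulVecLin_fromCols {R m n₁ n₂ : Type*} [CommSemiring R] [Fintype n₁] [Fintype n₂]
    (A : Matrix m n₁ R) (B : Matrix m n₂ R) :
    range (fromCols A B).mulVecLin = range A.mulVecLin ⊔ range B.mulVecLin := by
  rw [range_mulVecLin, range_mulVecLin, range_mulVecLin, ← Submodule.span_union,
    ← Set.Sum.elim_range]
  congr 2
  ext (j | j) <;> rfl

theorem exists_mul_eq_zero_and_mul_eq_one_iff {K m n l : Type*} [Field K]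
    [Fintype m] [Fintype n] [Fintype l] [DecidableEq l] (A : Matrix m n K) (B : Matrix m l K) :
    (∃ Q : Matrix l m K, Q * A = 0 ∧ Q * B = 1) ↔
      ∃ q : (m → K) →ₗ[K] (l → K),
        range A.mulVecLin ≤ ker q ∧ q ∘ₗ B.mulVecLin = LinearMap.id := by
  classical
  rw [LinearMap.toMatrix'.surjective.exists]
  refine exists_congr fun q => ?_
  rw [range_le_ker_iff, ← toLin'.injective.eq_iff, ← toLin'.injective.eq_iff (a := _ * B),
    toLin'_mul, toLin'_mul, toLin'_toMatrix', map_zero, toLin'_one, toLin'_apply',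
    toLin'_apply']

end Matrix

/-- Strong isolability is equivalent to the existence of a filter that exactly inverts the
fault channel while decoupling the disturbances (exact fault estimation with `M_r = I`). -/
theorem strong_isolability_iff_exact_fault_estimation
    (K : Type*) [Field K] (p m_d m_f : ℕ)
    (G_d : Matrix (Fin p) (Fin m_d) K)
    (G_f : Matrix (Fin p) (Fin m_f) K) :
    (Matrix.fromCols G_d G_f).rank = G_d.rank + m_f ↔
    ∃ Q : Matrix (Fin m_f) (Fin p) K,
      Q * G_d = 0 ∧ Q * G_f = (1 : Matrix (Fin m_f) (Fin m_f) K) := by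
  rw [Matrix.rank, Matrix.rank, range_mulVecLin_fromCols, exists_mul_eq_zero_and_mul_eq_one_iff,
    exists_le_ker_and_comp_eq_id_iff, ← finrank_sup_range_eq_add_iff, finrank_fin_fun]
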